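/- Let I be a critical independent set of a finite simple graph G and let S be a nonempty subset of N(I) with |N(S) ∩ I| = |S|. Then I \ (N(S) ∩ I) is also a critical independent set of G. -/

import Mathlib

open SimpleGraph

universe u

variable {V : Type u}

/-- `S` is an independent set of `G`. -/
def IsIndep (G : SimpleGraph V) (S : Set V) : Prop :=
  ∀ ⦃u⦄, u ∈ S → ∀ ⦃v⦄, v ∈ S → ¬ G.Adj u v

/-- The neighborhood `N(S)` of a vertex set. -/
def NSet (G : SimpleGraph V) (S : Set V) : Set V := {v | ∃ u ∈ S, G.Adj u v}

/-- `S` is a maximum independent set of `G`. -/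
def IsMaxIndep (G : SimpleGraph V) (S : Set V) : Prop :=
  IsIndep G S ∧ ∀ T : Set V, IsIndep G T → T.ncard ≤ S.ncard

/-- The independence number `α(G)`. -/
noncomputable def indepNum (G : SimpleGraph V) : ℕ :=
  sSup {n | ∃ S : Set V, IsIndep G S ∧ S.ncard = n}

/-- `core(G)`: intersection of all maximum independent sets. -/
def core (G : SimpleGraph V) : Set V := ⋂₀ {S | IsMaxIndep G S}

/-- `corona(G)`: union of all maximum independent sets. -/
def corona (G : SimpleGraph V) : Set V := ⋃₀ {S | IsMaxIndep G S}

/-- The difference `d_G(S) = |S| - |N(S)|`, as an integer. -/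
noncomputable def diffZ (G : SimpleGraph V) (S : Set V) : ℤ :=
  (S.ncard : ℤ) - ((NSet G S).ncard : ℤ)

/-- `S` is a critical independent set: independent and maximizing `|S| - |N(S)|`
among independent sets. -/
def IsCriticalIndep (G : SimpleGraph V) (S : Set V) : Prop :=
  IsIndep G S ∧ ∀ T : Set V, IsIndep G T → diffZ G T ≤ diffZ G S

/-- `ker(G)`: intersection of all critical independent sets. -/
def kerSet (G : SimpleGraph V) : Set V := ⋂₀ {S | IsCriticalIndep G S}

/-- `M` is a maximum matching of `G`. -/
def IsMaxMatching (G : SimpleGraph V) (M : G.Subgraph) : Prop :=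
  M.IsMatching ∧ ∀ M' : G.Subgraph, M'.IsMatching → M'.edgeSet.ncard ≤ M.edgeSet.ncard

/-- The matching number `μ(G)`. -/
noncomputable def matchNum (G : SimpleGraph V) : ℕ :=
  sSup {n | ∃ M : G.Subgraph, M.IsMatching ∧ M.edgeSet.ncard = n}

/-- `D(G)`: vertices missed by some maximum matching. -/
def DSet (G : SimpleGraph V) : Set V :=
  {v | ∃ M : G.Subgraph, IsMaxMatching G M ∧ v ∉ M.verts}

/-- `C` is the vertex set of an odd cycle of `G`. -/
def IsOddCycle (G : SimpleGraph V) (C : Set V) : Prop :=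
  ∃ (u : V) (w : G.Walk u u), w.IsCycle ∧ Odd w.length ∧ ∀ v, v ∈ w.support ↔ v ∈ C

/-- An edge list is `M`-alternating: consecutive edges, exactly one in `M`. -/
def Alternating (G : SimpleGraph V) (M : G.Subgraph) (l : List (Sym2 V)) : Prop :=
  List.Chain' (fun e f => (e ∈ M.edgeSet ↔ f ∉ M.edgeSet)) l

/-- `w` is an `M`-blossom with base `b`: an odd cycle, alternating, whose two
edges at the base are unmatched (so it carries `⌊length/2⌋` matched edges). -/
structure IsBlossom (G : SimpleGraph V) (M : G.Subgraph) (b : V) (w : G.Walk b b) : Prop where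
  cyc : w.IsCycle
  odd : Odd w.length
  alt : Alternating G M w.edges
  first : ∀ e ∈ w.edges.head?, e ∉ M.edgeSet
  last : ∀ e ∈ w.edges.getLast?, e ∉ M.edgeSet

/-- `p` is an `M`-stem from base `b` to root `r`: an even alternating path
starting (if nonempty) with a matched edge, whose root is `M`-unsaturated. -/
structure IsStem (G : SimpleGraph V) (M : G.Subgraph) (b r : V) (p : G.Walk b r) : Prop where
  path : p.IsPath
  even : Even p.length
  alt : Alternating G M p.edges
  first : ∀ e ∈ p.edges.head?, e ∈ M.edgeSet
  root : r ∉ M.verts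

/-- `F` is the vertex set of an `M`-flower of `G` whose blossom has vertex set `C`. -/
def IsFlowerOn (G : SimpleGraph V) (M : G.Subgraph) (C F : Set V) : Prop :=
  ∃ (b r : V) (w : G.Walk b b) (p : G.Walk b r),
    IsBlossom G M b w ∧ IsStem G M b r p ∧
    (∀ v, v ∈ w.support ↔ v ∈ C) ∧
    (∀ v, v ∈ p.support → v ∈ w.support → v = b) ∧
    F = {v | v ∈ w.support ∨ v ∈ p.support}

/-- The reach set `R(C)` of an odd cycle `C`: union of the vertex sets of all
`M`-flowers with blossom `C`, over all maximum matchings `M`. -/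
def reach (G : SimpleGraph V) (C : Set V) : Set V :=
  ⋃₀ {F | ∃ M : G.Subgraph, IsMaxMatching G M ∧ IsFlowerOn G M C F}

/-- `G` is `R`-disjoint: it has an odd cycle, every odd cycle has nonempty reach
set, and reach sets of distinct odd cycles are disjoint. -/
def RDisjoint (G : SimpleGraph V) : Prop :=
  (∃ C : Set V, IsOddCycle G C) ∧
  (∀ C : Set V, IsOddCycle G C → (reach G C).Nonempty) ∧
  (∀ C C' : Set V, IsOddCycle G C → IsOddCycle G C' → C ≠ C' →
    reach G C ∩ reach G C' = ∅)

/-- `B(G) = V(G) \ ⋃_C R(C)`. -/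
def bipartPart (G : SimpleGraph V) : Set V :=
  {v | ∀ C : Set V, IsOddCycle G C → v ∉ reach G C}

/-- `G` is bipartite: its vertex set splits into two independent sets. -/
def IsBipartiteGraph (G : SimpleGraph V) : Prop :=
  ∃ A B : Set V, (∀ v, v ∈ A ∨ v ∈ B) ∧ A ∩ B = ∅ ∧ IsIndep G A ∧ IsIndep G B

/-- `G` is almost bipartite: it has exactly one odd cycle. -/
def AlmostBipartite (G : SimpleGraph V) : Prop := ∃! C : Set V, IsOddCycle G C

/-- `G` is a König–Egerváry graph: `α(G) + μ(G) = |V(G)|`. -/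
def IsKE {W : Type*} (G : SimpleGraph W) : Prop :=
  _root_.indepNum G + matchNum G = Nat.card W

/-! Deleting `A = N(S) ∩ I` from `I` keeps it independent, and every neighbour of `I \ A`
lies in `N(I)` but outside `S` (a vertex of `S` adjacent to `u ∈ I` puts `u` into `A`).
So `I \ A` loses `|A|` vertices and at least `|S|` neighbours; when `|A| ≤ |S|` its
difference is at least that of `I`, hence maximal. -/

variable {G : SimpleGraph V} {I J S : Set V}

lemma IsIndep.mono (hI : IsIndep G I) (hJ : J ⊆ I) : IsIndep G J :=
  fun _ hu _ hv => hI (hJ hu) (hJ hv)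

lemma NSet_sdiff_NSet_subset : NSet G (I \ NSet G S) ⊆ NSet G I \ S := by
  rintro v ⟨u, hu, huv⟩
  exact ⟨⟨u, hu.1, huv⟩, fun hv => hu.2 ⟨v, hv, huv.symm⟩⟩

lemma diffZ_le_diffZ_sdiff_NSet [Finite V] (hS : S ⊆ NSet G I)
    (hle : (NSet G S ∩ I).ncard ≤ S.ncard) : diffZ G I ≤ diffZ G (I \ NSet G S) := by
  have hI : (I ∩ NSet G S).ncard + (I \ NSet G S).ncard = I.ncard :=
    Set.ncard_inter_add_ncard_sdiff_eq_ncard I (NSet G S)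
  have hN : (NSet G I \ S).ncard + S.ncard = (NSet G I).ncard :=
    Set.ncard_sdiff_add_ncard_of_subset hS
  have hNle : (NSet G (I \ NSet G S)).ncard ≤ (NSet G I \ S).ncard :=
    Set.ncard_le_ncard NSet_sdiff_NSet_subset
  rw [Set.inter_comm] at hI
  unfold diffZ
  omega

theorem stmt_18_general {V : Type u} [Fintype V] (G : SimpleGraph V) (I S : Set V)
    (hI : IsCriticalIndep G I) (hS : S ⊆ NSet G I)
    (htight : (NSet G S ∩ I).ncard = S.ncard) :
    IsCriticalIndep G (I \ (NSet G S ∩ I)) := by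
  obtain ⟨hind, hmax⟩ := hI
  rw [Set.sdiff_inter_self_eq_sdiff]
  exact ⟨hind.mono Set.sdiff_subset, fun T hT =>
    (hmax T hT).trans (diffZ_le_diffZ_sdiff_NSet hS htight.le)⟩

/-- Removing from a critical independent set `I` the `I`-neighbors of a tight
set `S ⊆ N(I)` yields again a critical independent set. -/
theorem stmt_18 {V : Type u} [Fintype V] (G : SimpleGraph V) (I S : Set V)
    (hI : IsCriticalIndep G I) (hS : S ⊆ NSet G I) (hne : S.Nonempty)
    (htight : (NSet G S ∩ I).ncard = S.ncard) :
    IsCriticalIndep G (I \ (NSet G S ∩ I)) :=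
  stmt_18_general G I S hI hS htight
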